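/- Let 0<q<p be coprime with p/q=[a_1,...,a_n], a_i≥2, and let q* denote the multiplicative inverse of q modulo p with 0<q*<p. Let A be the associated tridiagonal matrix, w=(a_1-2,...,a_n-2)^T, and I(p/q)=Σ_{j=1}^n (a_j-3). Then w^T A^{-1} w = 2 - I(p/q) - n - (q+q*+2)/p. -/

import Mathlib

open scoped Matrix

/-- Hirzebruch–Jung (negative-regular) continued fraction
`[a₁,...,aₙ] = a₁ - 1/(a₂ - 1/(⋯ - 1/aₙ))`. -/
def hjCF : List ℚ → ℚ
  | [] => 0
  | [a] => a
  | a :: b :: l => a - 1 / hjCF (b :: l)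

/-- The tridiagonal matrix with diagonal `-a₁,...,-aₙ` and off-diagonal entries `1`. -/
def tridiag {n : ℕ} (a : Fin n → ℤ) : Matrix (Fin n) (Fin n) ℚ :=
  Matrix.of fun i j =>
    if i = j then -(a i : ℚ)
    else if (i : ℕ) + 1 = (j : ℕ) ∨ (j : ℕ) + 1 = (i : ℕ) then 1 else 0

/-!
Let `K(a₁,…,aₖ)` be the continuant, so `p = K(a₁,…,aₙ)`, `q = K(a₂,…,aₙ)` and
`q* = K(a₁,…,aₙ₋₁)`; all of them are entries of the product of the matrices `[[aᵢ, -1], [1, 0]]`,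
whose determinant `1` gives `q q* ≡ 1 (mod p)`. With `w = (aᵢ - 2)` one has
`A 𝟙 = -w - e₁ - eₙ`, while the vectors `uᵢ = K(aᵢ₊₁,…,aₙ)` and `vᵢ = K(a₁,…,aᵢ₋₁)` satisfy
`A u = -p e₁` and `A v = -p eₙ`. Hence `x = A⁻¹ w = -𝟙 + (u + v) / p`, and since `A` is symmetric,
`∑ wᵢ = 𝟙 ⬝ A x = (A 𝟙) ⬝ x = -w ⬝ x - x₁ - xₙ`, where `x₁ = -1 + (q + 1) / p` and
`xₙ = -1 + (1 + q*) / p`.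
-/

open Matrix

/-- For `l = [a₁,…,aₙ]` this is `[[K(a₁..aₙ), -K(a₁..aₙ₋₁)], [K(a₂..aₙ), -K(a₂..aₙ₋₁)]]`, where the
continuant of an empty run is `1` and that of a run of length `-1` is `0`. -/
def continuantMatrix (l : List ℤ) : Matrix (Fin 2) (Fin 2) ℤ :=
  (l.map fun x => !![x, -1; 1, 0]).prod

def continuant (l : List ℤ) : ℤ := continuantMatrix l 0 0

@[simp] lemma continuantMatrix_nil : continuantMatrix [] = 1 := rfl

lemma continuantMatrix_cons (x : ℤ) (l : List ℤ) :
    continuantMatrix (x :: l) = !![x, -1; 1, 0] * continuantMatrix l := by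
  simp [continuantMatrix]

lemma continuantMatrix_append (l : List ℤ) (x : ℤ) :
    continuantMatrix (l ++ [x]) = continuantMatrix l * !![x, -1; 1, 0] := by
  simp [continuantMatrix]

lemma det_continuantMatrix (l : List ℤ) : (continuantMatrix l).det = 1 := by
  induction l with
  | nil => simp
  | cons x l ih => rw [continuantMatrix_cons, det_mul, ih]; simp [det_fin_two]

@[simp] lemma continuant_nil : continuant [] = 1 := rfl

lemma continuant_cons (x : ℤ) (l : List ℤ) :
    continuant (x :: l) = x * continuant l - continuantMatrix l 1 0 := by
  simp [continuant, continuantMatrix_cons, mul_apply, Fin.sum_univ_two]; ring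

@[simp] lemma continuantMatrix_cons_one_zero (x : ℤ) (l : List ℤ) :
    continuantMatrix (x :: l) 1 0 = continuant l := by
  simp [continuant, continuantMatrix_cons, mul_apply, Fin.sum_univ_two]

lemma continuant_append (l : List ℤ) (x : ℤ) :
    continuant (l ++ [x]) = x * continuant l + continuantMatrix l 0 1 := by
  simp [continuant, continuantMatrix_append, mul_apply, Fin.sum_univ_two]; ring

@[simp] lemma continuantMatrix_append_zero_one (l : List ℤ) (x : ℤ) :
    continuantMatrix (l ++ [x]) 0 1 = -continuant l := by
  simp [continuant, continuantMatrix_append, mul_apply, Fin.sum_univ_two]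

lemma isCoprime_continuant_continuantMatrix_one_zero (l : List ℤ) :
    IsCoprime (continuant l) (continuantMatrix l 1 0) :=
  ⟨continuantMatrix l 1 1, -continuantMatrix l 0 1, by
    have hdet := det_continuantMatrix l
    rw [det_fin_two] at hdet
    rw [continuant]
    linear_combination hdet⟩

lemma continuantMatrix_one_zero_lt_continuant {l : List ℤ} (hl : ∀ x ∈ l, 2 ≤ x) :
    0 ≤ continuantMatrix l 1 0 ∧ continuantMatrix l 1 0 < continuant l := by
  induction l with
  | nil => simp
  | cons x l ih =>
    obtain ⟨h0, h1⟩ := ih fun y hy => hl y (List.mem_cons_of_mem x hy)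
    have hx := hl x List.mem_cons_self
    rw [continuantMatrix_cons_one_zero, continuant_cons]
    constructor <;> nlinarith

lemma neg_continuantMatrix_zero_one_lt_continuant {l : List ℤ} (hl : ∀ x ∈ l, 2 ≤ x) :
    0 ≤ -continuantMatrix l 0 1 ∧ -continuantMatrix l 0 1 < continuant l := by
  induction l using List.reverseRecOn with
  | nil => simp
  | append_singleton l x ih =>
    obtain ⟨h0, h1⟩ := ih fun y hy => hl y (List.mem_append_left _ hy)
    have hx := hl x (by simp)
    rw [continuantMatrix_append_zero_one, continuant_append]
    constructor <;> nlinarith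

lemma continuant_pos {l : List ℤ} (hl : ∀ x ∈ l, 2 ≤ x) : 0 < continuant l :=
  let ⟨h0, h1⟩ := continuantMatrix_one_zero_lt_continuant hl
  h0.trans_lt h1

lemma hjCF_map_intCast {l : List ℤ} (hne : l ≠ []) (hl : ∀ x ∈ l, 2 ≤ x) :
    hjCF (l.map (↑)) = continuant l / continuantMatrix l 1 0 := by
  induction l with
  | nil => exact absurd rfl hne
  | cons x l ih =>
    rcases l with _ | ⟨y, l⟩
    · simp [hjCF, continuant_cons]
    · have hK := continuant_pos fun z hz => hl z (List.mem_cons_of_mem x hz)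
      rw [List.map_cons, List.map_cons, hjCF, ← List.map_cons,
        ih (List.cons_ne_nil y l) fun z hz => hl z (List.mem_cons_of_mem x hz),
        continuantMatrix_cons_one_zero, continuantMatrix_cons_one_zero, continuant_cons x,
        continuantMatrix_cons_one_zero]
      field_simp
      push_cast
      ring

lemma continuantMatrix_one_zero_pos {l : List ℤ} (hne : l ≠ []) (hl : ∀ x ∈ l, 2 ≤ x) :
    0 < continuantMatrix l 1 0 := by
  obtain ⟨x, l, rfl⟩ := List.exists_cons_of_ne_nil hne
  rw [continuantMatrix_cons_one_zero]
  exact continuant_pos fun y hy => hl y (List.mem_cons_of_mem x hy)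

lemma continuantMatrix_one_zero_mul_neg_zero_one_modEq (l : List ℤ) :
    continuantMatrix l 1 0 * -continuantMatrix l 0 1 ≡ 1 [ZMOD continuant l] := by
  have hdet := det_continuantMatrix l
  rw [det_fin_two] at hdet
  rw [Int.modEq_iff_dvd]
  exact ⟨continuantMatrix l 1 1, by rw [continuant]; linear_combination -hdet⟩

lemma continuant_eq_of_hjCF_eq {l : List ℤ} (hne : l ≠ []) (hl : ∀ x ∈ l, 2 ≤ x) {p q : ℤ}
    (hq : 0 < q) (hcop : Int.gcd p q = 1) (h : hjCF (l.map (↑)) = p / q) :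
    continuant l = p ∧ continuantMatrix l 1 0 = q := by
  rw [hjCF_map_intCast hne hl] at h
  exact Rat.div_int_inj (continuantMatrix_one_zero_pos hne hl) hq
    (Int.isCoprime_iff_gcd_eq_one.mp (isCoprime_continuant_continuantMatrix_one_zero l)) hcop h

lemma neg_continuantMatrix_zero_one_eq_of_modEq {l : List ℤ} (hl : ∀ x ∈ l, 2 ≤ x) {qs : ℤ}
    (hqs : 0 ≤ qs) (hqsp : qs < continuant l)
    (hinv : continuantMatrix l 1 0 * qs ≡ 1 [ZMOD continuant l]) :
    -continuantMatrix l 0 1 = qs := by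
  obtain ⟨h0, h1⟩ := neg_continuantMatrix_zero_one_lt_continuant hl
  have hmod : -continuantMatrix l 0 1 ≡ qs [ZMOD continuant l] :=
    calc -continuantMatrix l 0 1 = 1 * -continuantMatrix l 0 1 := (one_mul _).symm
      _ ≡ (continuantMatrix l 1 0 * qs) * -continuantMatrix l 0 1 [ZMOD continuant l] :=
        hinv.symm.mul_right _
      _ = (continuantMatrix l 1 0 * -continuantMatrix l 0 1) * qs := by ring
      _ ≡ 1 * qs [ZMOD continuant l] :=
        (continuantMatrix_one_zero_mul_neg_zero_one_modEq l).mul_right _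
      _ = qs := one_mul _
  rwa [Int.ModEq, Int.emod_eq_of_lt h0 h1, Int.emod_eq_of_lt hqs hqsp] at hmod

lemma take_add_one_ofFn {α : Type*} {n : ℕ} (f : Fin n → α) (i : Fin n) :
    (List.ofFn f).take (i + 1) = (List.ofFn f).take i ++ [f i] := by
  simp [List.take_add_one]

lemma drop_ofFn_eq_cons {α : Type*} {n : ℕ} (f : Fin n → α) (i : Fin n) :
    (List.ofFn f).drop i = f i :: (List.ofFn f).drop (i + 1) := by
  rw [List.drop_eq_getElem_cons (by simp)]
  simp

section Tridiag

variable {n : ℕ} (a : Fin n → ℤ)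

lemma tridiag_transpose : (tridiag a)ᵀ = tridiag a := by
  ext i j
  simp only [transpose_apply, tridiag, of_apply]
  by_cases h : i = j
  · subst h; rfl
  · simp [h, Ne.symm h, or_comm]

lemma tridiag_mulVec_apply (x : ℕ → ℚ) (i : Fin n) :
    (tridiag a *ᵥ fun j => x j) i =
      (if (i : ℕ) = 0 then 0 else x (i - 1)) - a i * x i
        + (if (i : ℕ) + 1 = n then 0 else x (i + 1)) := by
  have hterm : ∀ k : ℕ, (if (i : ℕ) = k then -(a i : ℚ)
        else if (i : ℕ) + 1 = k ∨ k + 1 = i then 1 else 0) * x k =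
      (if k = i then -a i * x k else 0) + (if k = i + 1 then x k else 0)
        + (if k + 1 = i then x k else 0) := by
    intro k
    split_ifs <;> first | omega | ring
  have hlow : ∑ k ∈ Finset.range n, (if k + 1 = (i : ℕ) then x k else 0)
      = if (i : ℕ) = 0 then 0 else x (i - 1) := by
    obtain ⟨i, hi⟩ := i
    cases i with
    | zero => simp
    | succ m => simp [Finset.sum_ite_eq', show m < n by omega]
  simp only [mulVec, dotProduct, tridiag, of_apply, ← Fin.val_inj]
  rw [Fin.sum_univ_eq_sum_range (fun k => (if (i : ℕ) = k then -(a i : ℚ)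
        else if (i : ℕ) + 1 = k ∨ k + 1 = i then 1 else 0) * x k)]
  simp only [hterm, Finset.sum_add_distrib, hlow, Finset.sum_ite_eq', Finset.mem_range, i.isLt]
  split_ifs <;> first | omega | ring

lemma tridiag_mulVec_one_apply (i : Fin n) :
    (tridiag a *ᵥ fun _ => 1) i =
      2 - a i - (if (i : ℕ) = 0 then 1 else 0) - (if (i : ℕ) + 1 = n then 1 else 0) := by
  rw [tridiag_mulVec_apply a (fun _ => 1)]
  split_ifs <;> ring

lemma tridiag_mulVec_continuant_take_apply (i : Fin n) :
    (tridiag a *ᵥ fun j => (continuant ((List.ofFn a).take j) : ℚ)) i =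
      if (i : ℕ) + 1 = n then -(continuant (List.ofFn a) : ℚ) else 0 := by
  rw [tridiag_mulVec_apply a (fun k => (continuant ((List.ofFn a).take k) : ℚ))]
  have hnext := congrArg continuant (take_add_one_ofFn a i)
  rw [continuant_append] at hnext
  have hprev : (if (i : ℕ) = 0 then 0 else (continuant ((List.ofFn a).take (i - 1)) : ℚ))
      = -continuantMatrix ((List.ofFn a).take i) 0 1 := by
    obtain ⟨_ | m, hi⟩ := i
    · simp
    · have := congrArg (fun l => -(continuantMatrix l 0 1 : ℚ)) (take_add_one_ofFn a ⟨m, by omega⟩)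
      simpa using this.symm
  rw [hprev]
  split_ifs with hlast
  · rw [List.take_of_length_le (by simp [hlast])] at hnext
    rw [hnext]; push_cast; ring
  · rw [hnext]; push_cast; ring

lemma tridiag_mulVec_continuant_drop_apply (i : Fin n) :
    (tridiag a *ᵥ fun j => (continuant ((List.ofFn a).drop (j + 1)) : ℚ)) i =
      if (i : ℕ) = 0 then -(continuant (List.ofFn a) : ℚ) else 0 := by
  rw [tridiag_mulVec_apply a (fun k => (continuant ((List.ofFn a).drop (k + 1)) : ℚ))]
  have hcur := congrArg continuant (drop_ofFn_eq_cons a i)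
  rw [continuant_cons] at hcur
  have hnext : (if (i : ℕ) + 1 = n then 0 else (continuant ((List.ofFn a).drop (i + 1 + 1)) : ℚ))
      = continuantMatrix ((List.ofFn a).drop (i + 1)) 1 0 := by
    split_ifs with hlast
    · simp [List.drop_eq_nil_of_le (by simp [hlast] : (List.ofFn a).length ≤ i + 1)]
    · rw [drop_ofFn_eq_cons a ⟨i + 1, by omega⟩]
      simp
  rw [hnext]
  split_ifs with hfirst
  · rw [hfirst] at hcur ⊢
    simp only [List.drop_zero] at hcur
    rw [hcur]; push_cast; ring
  · obtain ⟨_ | m, hi⟩ := i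
    · simp at hfirst
    · simp only [Nat.add_sub_cancel] at hcur ⊢
      rw [hcur]; push_cast; ring

lemma eq_zero_of_tridiag_mulVec_eq_zero {x : ℕ → ℚ} (hx0 : x 0 = 0)
    (hrow : ∀ i : Fin n, (i : ℕ) + 1 < n → (tridiag a *ᵥ fun j => x j) i = 0) :
    ∀ k < n, x k = 0 := by
  intro k
  induction k using Nat.strong_induction_on with
  | _ k ih =>
    intro hk
    match k, ih with
    | 0, _ => exact hx0
    | 1, _ =>
      have := hrow ⟨0, by omega⟩ hk
      rw [tridiag_mulVec_apply] at this
      simp only [hx0] at this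
      simpa [show 1 ≠ n by omega] using this
    | m + 2, ih =>
      have := hrow ⟨m + 1, by omega⟩ hk
      rw [tridiag_mulVec_apply] at this
      simpa [show m + 2 ≠ n by omega, ih m (by omega) (by omega),
        ih (m + 1) (by omega) (by omega)] using this

/-- A kernel vector is determined by its first entry through the first `n - 1` rows, so it is a
multiple of the vector of continuants `K(a₁,…,aᵢ₋₁)`, which the last row sends to `-K(a₁,…,aₙ)`. -/
lemma isUnit_tridiag (hK : continuant (List.ofFn a) ≠ 0) : IsUnit (tridiag a) := by
  rw [← mulVec_injective_iff_isUnit]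
  intro y₁ y₂ hy
  rcases Nat.eq_zero_or_pos n with rfl | hn
  · exact Subsingleton.elim _ _
  set x : ℕ → ℚ := fun k => if h : k < n then (y₁ - y₂) ⟨k, h⟩ else 0
  have hxy : (fun j : Fin n => x j) = y₁ - y₂ := by funext j; simp [x]
  have hAx : tridiag a *ᵥ (fun j => x j) = 0 := by rw [hxy, mulVec_sub, hy, sub_self]
  set v : ℕ → ℚ := fun k => continuant ((List.ofFn a).take k)
  have hAv := tridiag_mulVec_continuant_take_apply a
  have hx_eq : ∀ k < n, x k - x 0 * v k = 0 := by
    refine eq_zero_of_tridiag_mulVec_eq_zero a (by simp [v]) fun i hi => ?_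
    have hfun : (fun j : Fin n => x j - x 0 * v j) =
        (fun j : Fin n => x j) - x 0 • fun j : Fin n => v j := by
      funext j; simp
    rw [hfun, mulVec_sub, mulVec_smul, hAx, Pi.sub_apply, Pi.smul_apply, hAv, if_neg hi.ne]
    simp
  have hxv : (fun j : Fin n => x j) = x 0 • fun j : Fin n => v j := by
    funext j
    simpa [sub_eq_zero] using hx_eq j j.isLt
  have hx0 : x 0 = 0 := by
    have := congrFun hAx ⟨n - 1, by omega⟩
    rw [hxv, mulVec_smul, Pi.smul_apply, hAv, if_pos (by simp; omega)] at this
    simpa [hK] using this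
  rw [← sub_eq_zero, ← hxy, hxv, hx0, zero_smul]

/-- `A⁻¹ w = -𝟙 + (u + v) / K`, from `A 𝟙 = -w - e₁ - eₙ`, `A u = -K e₁` and `A v = -K eₙ`. -/
def tridiagSolution (k : ℕ) : ℚ :=
  -1 + ((continuant ((List.ofFn a).drop (k + 1)) + continuant ((List.ofFn a).take k) : ℤ) : ℚ)
    / continuant (List.ofFn a)

lemma tridiag_mulVec_tridiagSolution (hK : continuant (List.ofFn a) ≠ 0) :
    tridiag a *ᵥ (fun j => tridiagSolution a j) = fun i => (a i : ℚ) - 2 := by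
  have hsplit : (fun j : Fin n => tridiagSolution a j) =
      (continuant (List.ofFn a) : ℚ)⁻¹ •
          ((fun j : Fin n => (continuant ((List.ofFn a).drop (j + 1)) : ℚ))
            + fun j : Fin n => (continuant ((List.ofFn a).take j) : ℚ)) - fun _ => 1 := by
    funext j
    simp only [tridiagSolution, Pi.sub_apply, Pi.smul_apply, Pi.add_apply, smul_eq_mul]
    push_cast
    ring
  funext i
  rw [hsplit, mulVec_sub, mulVec_smul, mulVec_add, Pi.sub_apply, Pi.smul_apply, Pi.add_apply,
    tridiag_mulVec_continuant_drop_apply, tridiag_mulVec_continuant_take_apply,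
    tridiag_mulVec_one_apply]
  have hK' : (continuant (List.ofFn a) : ℚ) ≠ 0 := by exact_mod_cast hK
  rw [smul_eq_mul]
  split_ifs <;> field_simp <;> ring

lemma inv_tridiag_mulVec_sub_two (hK : continuant (List.ofFn a) ≠ 0) :
    (tridiag a)⁻¹ *ᵥ (fun i => (a i : ℚ) - 2) = fun j : Fin n => tridiagSolution a j := by
  rw [← tridiag_mulVec_tridiagSolution a hK, mulVec_mulVec,
    nonsing_inv_mul _ ((isUnit_iff_isUnit_det _).mp (isUnit_tridiag a hK)), one_mulVec]

end Tridiag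

lemma sum_tridiag_mulVec {n : ℕ} (a : Fin (n + 1) → ℤ) (x : ℕ → ℚ) :
    ∑ i, (tridiag a *ᵥ fun j => x j) i = ∑ i, (2 - a i) * x i - x 0 - x n := by
  have hsym : ∑ i, (tridiag a *ᵥ fun j => x j) i = (tridiag a *ᵥ fun _ => 1) ⬝ᵥ fun j => x j :=
    calc ∑ i, (tridiag a *ᵥ fun j => x j) i
        = (fun _ => 1) ⬝ᵥ (tridiag a *ᵥ fun j => x j) := by simp [dotProduct]
      _ = ((tridiag a)ᵀ *ᵥ fun _ => 1) ⬝ᵥ fun j => x j := by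
        rw [dotProduct_mulVec, mulVec_transpose]
      _ = _ := by rw [tridiag_transpose]
  simp only [hsym, dotProduct, tridiag_mulVec_one_apply, sub_mul, Finset.sum_sub_distrib,
    ite_mul, one_mul, zero_mul]
  rw [Fin.sum_univ_eq_sum_range (fun k => if k = 0 then x k else 0),
    Fin.sum_univ_eq_sum_range (fun k => if k + 1 = n + 1 then x k else 0)]
  simp [Finset.sum_ite_eq']

lemma sub_two_dotProduct_inv_tridiag_mulVec {m : ℕ} (a : Fin (m + 1) → ℤ)
    (hK : continuant (List.ofFn a) ≠ 0) :
    (fun i => (a i : ℚ) - 2) ⬝ᵥ ((tridiag a)⁻¹ *ᵥ fun i => (a i : ℚ) - 2) =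
      2 - ∑ i, ((a i : ℚ) - 2)
        - ((continuantMatrix (List.ofFn a) 1 0 - continuantMatrix (List.ofFn a) 0 1 + 2 : ℤ) : ℚ)
          / continuant (List.ofFn a) := by
  have hsum := sum_tridiag_mulVec a (tridiagSolution a)
  rw [tridiag_mulVec_tridiagSolution a hK] at hsum
  have hfirst : tridiagSolution a 0 =
      -1 + ((continuantMatrix (List.ofFn a) 1 0 + 1 : ℤ) : ℚ) / continuant (List.ofFn a) := by
    have h10 := congrArg (fun l => continuantMatrix l 1 0) (drop_ofFn_eq_cons a 0)
    simp only [Fin.val_zero, List.drop_zero, continuantMatrix_cons_one_zero, zero_add] at h10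
    rw [tridiagSolution, zero_add, List.take_zero, continuant_nil, ← h10]
  have hlast : tridiagSolution a m =
      -1 + ((1 - continuantMatrix (List.ofFn a) 0 1 : ℤ) : ℚ) / continuant (List.ofFn a) := by
    have h01 := congrArg (fun l => continuantMatrix l 0 1) (take_add_one_ofFn a (Fin.last m))
    simp only [Fin.val_last, continuantMatrix_append_zero_one] at h01
    rw [List.take_of_length_le (by simp)] at h01
    rw [tridiagSolution, List.drop_of_length_le (by simp), continuant_nil, h01]
    push_cast; ring
  have hK' : (continuant (List.ofFn a) : ℚ) ≠ 0 := by exact_mod_cast hK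
  have hneg : ∑ i, ((a i : ℚ) - 2) * tridiagSolution a i =
      -∑ i, (2 - (a i : ℚ)) * tridiagSolution a i := by
    rw [← Finset.sum_neg_distrib]
    exact Finset.sum_congr rfl fun i _ => by ring
  rw [inv_tridiag_mulVec_sub_two a hK, dotProduct, hneg, hsum, hfirst, hlast]
  push_cast
  field_simp
  ring

theorem wT_inv_w (p q qs : ℤ) (hq : 0 < q) (hqp : q < p) (hcop : Int.gcd p q = 1)
    (hqs : 0 < qs) (hqsp : qs < p) (hinv : q * qs ≡ 1 [ZMOD p])
    (n : ℕ) (a : Fin n → ℤ) (ha : ∀ i, 2 ≤ a i)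
    (hhj : hjCF (List.ofFn fun i => ((a i : ℚ))) = (p : ℚ) / q) :
    (fun i => (a i : ℚ) - 2) ⬝ᵥ ((tridiag a)⁻¹.mulVec (fun i => (a i : ℚ) - 2))
      = 2 - (∑ i, ((a i : ℚ) - 3)) - n - ((q : ℚ) + qs + 2) / p := by
  obtain ⟨m, rfl⟩ : ∃ m, n = m + 1 := by
    rcases n with _ | m
    · rw [List.ofFn_zero, hjCF, eq_comm, div_eq_zero_iff] at hhj
      norm_cast at hhj
      omega
    · exact ⟨m, rfl⟩
  have hl : ∀ x ∈ List.ofFn a, 2 ≤ x := fun x hx => by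
    obtain ⟨i, rfl⟩ := List.mem_ofFn.mp hx
    exact ha i
  obtain ⟨hKp, hKq⟩ := continuant_eq_of_hjCF_eq (by simp) hl hq hcop (by rwa [List.map_ofFn])
  have hKqs :=
    neg_continuantMatrix_zero_one_eq_of_modEq hl hqs.le (hKp ▸ hqsp) (hKp ▸ hKq ▸ hinv)
  rw [sub_two_dotProduct_inv_tridiag_mulVec a (hKp ▸ (hq.trans hqp).ne'), hKp, hKq,
    ← neg_neg (continuantMatrix _ 0 1), hKqs]
  simp only [Finset.sum_sub_distrib, Finset.sum_const, Finset.card_univ, Fintype.card_fin]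
  push_cast
  ring
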